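/- arXiv:0909.4909 — 2 statements merged into one kernel-verified Lean document; each statement's English description precedes it below -/
import Mathlib

section
/- If T = (1/2)Σ m_i |v_i|², I = Σ m_i |r_i|², J = Σ m_i r_i·v_i, C = Σ m_i (x_i ẏ_i − y_i ẋ_i), and equality 2TI = J² + C² holds with I > 0, then for each i the velocity decomposes as v_i = (J/I) r_i + (C/I) r_i^⊥, where r_i^⊥ = (−y_i, x_i); i.e., all bodies share the same instantaneous dilation rate and rotation rate. -/
/-!
Expanding the square, for every dilation rate `a` and rotation rate `b`,
`∑ mᵢ |vᵢ - a rᵢ - b rᵢ^⊥|² = 2T - 2aJ - 2bC + (a² + b²) I`.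
At `a = J/I`, `b = C/I` the right side is `(2TI - J² - C²)/I`, which vanishes by hypothesis;
a vanishing sum of nonnegative terms with positive weights forces each residual to vanish.
-/

open Finset

theorem eq_zero_of_sum_mul_sq_add_sq_eq_zero {ι : Type*} [Fintype ι] {m p q : ι → ℝ}
    (hm : ∀ i, 0 < m i) (h : ∑ i, m i * (p i ^ 2 + q i ^ 2) = 0) (i : ι) :
    p i = 0 ∧ q i = 0 := by
  have hterm := (sum_eq_zero_iff_of_nonneg fun j _ => by have := hm j; positivity).mp h i
    (mem_univ i)
  have hsq : p i ^ 2 + q i ^ 2 = 0 := (mul_eq_zero.mp hterm).resolve_left (hm i).ne'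
  exact ⟨by nlinarith [sq_nonneg (p i), sq_nonneg (q i)],
    by nlinarith [sq_nonneg (p i), sq_nonneg (q i)]⟩

theorem sum_mul_dilation_rotation_residual_sq {ι : Type*} [Fintype ι] (m : ι → ℝ)
    (r v : ι → ℝ × ℝ) (a b : ℝ) :
    ∑ i, m i * (((v i).1 - a * (r i).1 + b * (r i).2) ^ 2
        + ((v i).2 - a * (r i).2 - b * (r i).1) ^ 2) =
      ∑ i, m i * ((v i).1 ^ 2 + (v i).2 ^ 2)
        - 2 * a * ∑ i, m i * ((r i).1 * (v i).1 + (r i).2 * (v i).2)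
        - 2 * b * ∑ i, m i * ((r i).1 * (v i).2 - (r i).2 * (v i).1)
        + (a ^ 2 + b ^ 2) * ∑ i, m i * ((r i).1 ^ 2 + (r i).2 ^ 2) := by
  simp only [mul_sum, ← sum_sub_distrib, ← sum_add_distrib]
  exact sum_congr rfl fun i _ => by ring

/-- Equality in Sundman's inequality forces each velocity to decompose as
v_i = (J/I) r_i + (C/I) r_i^⊥, with r_i^⊥ = (−y_i, x_i). -/
theorem sundman_equality_case
    (n : ℕ) (m : Fin n → ℝ) (r v : Fin n → ℝ × ℝ) (T I J C : ℝ)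
    (hm : ∀ i, 0 < m i)
    (hT : T = (1 / 2) * ∑ i, m i * ((v i).1 ^ 2 + (v i).2 ^ 2))
    (hI : I = ∑ i, m i * ((r i).1 ^ 2 + (r i).2 ^ 2))
    (hJ : J = ∑ i, m i * ((r i).1 * (v i).1 + (r i).2 * (v i).2))
    (hC : C = ∑ i, m i * ((r i).1 * (v i).2 - (r i).2 * (v i).1))
    (hIpos : 0 < I)
    (heq : 2 * T * I = J ^ 2 + C ^ 2) :
    ∀ i, (v i).1 = (J / I) * (r i).1 + (C / I) * (-(r i).2) ∧
         (v i).2 = (J / I) * (r i).2 + (C / I) * (r i).1 := by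
  have hresidual : ∑ i, m i * (((v i).1 - J / I * (r i).1 + C / I * (r i).2) ^ 2
      + ((v i).2 - J / I * (r i).2 - C / I * (r i).1) ^ 2) = 0 := by
    have hkinetic : ∑ i, m i * ((v i).1 ^ 2 + (v i).2 ^ 2) = 2 * T := by rw [hT]; ring
    rw [sum_mul_dilation_rotation_residual_sq, hkinetic, ← hJ, ← hC, ← hI]
    field_simp
    linear_combination heq
  intro i
  obtain ⟨h1, h2⟩ := eq_zero_of_sum_mul_sq_add_sq_eq_zero hm hresidual i
  constructor <;> linarith
end

section
/- Every solution of the n-body problem in which all bodies remain on a common line for all time is planar: the motion takes place in a fixed plane containing the center of mass. -/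
/-! Since all bodies are collinear, each force `∑ⱼ gᵢⱼ (rᵢ - rⱼ)` is parallel to `rᵢ`, so every
torque vanishes and the total angular momentum `L` is conserved. Moreover
`rᵢ ⬝ (rⱼ × ṙⱼ) = ṙⱼ ⬝ (rᵢ × rⱼ) = 0`, so each `rᵢ(t)` is orthogonal to `L(t) = L(0) ≠ 0`. -/

open Matrix

section CrossProduct

variable {𝕜 : Type*} [NontriviallyNormedField 𝕜] [CompleteSpace 𝕜]

noncomputable def crossProductCLM : (Fin 3 → 𝕜) →L[𝕜] (Fin 3 → 𝕜) →L[𝕜] Fin 3 → 𝕜 :=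
  LinearMap.toContinuousLinearMap (LinearMap.toContinuousLinearMap.toLinearMap ∘ₗ crossProduct)

theorem HasDerivAt.cross {u v : 𝕜 → Fin 3 → 𝕜} {u' v' : Fin 3 → 𝕜} {x : 𝕜}
    (hu : HasDerivAt u u' x) (hv : HasDerivAt v v' x) :
    HasDerivAt (fun y => u y ⨯₃ v y) (u x ⨯₃ v' + u' ⨯₃ v x) x :=
  crossProductCLM.hasDerivAt_of_bilinear (fun _ => hu) (fun _ => hv)

end CrossProduct

theorem cross_sum_smul_sub_eq_zero {R ι : Type*} [CommRing R] {x : ι → Fin 3 → R}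
    (hx : ∀ i j, x i ⨯₃ x j = 0) (i : ι) (s : Finset ι) (c : ι → R) :
    x i ⨯₃ ∑ j ∈ s, c j • (x i - x j) = 0 := by
  simp [map_sum, hx]

section AngularMomentum

variable {ι : Type*} [Fintype ι] (m : ι → ℝ) (r : ι → ℝ → Fin 3 → ℝ)

noncomputable def angularMomentum (t : ℝ) : Fin 3 → ℝ :=
  ∑ i, m i • r i t ⨯₃ deriv (r i) t

variable {m r}

theorem hasDerivAt_angularMomentum (hd : ∀ i, Differentiable ℝ (r i))
    (hd' : ∀ i, Differentiable ℝ (deriv (r i))) (t : ℝ) :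
    HasDerivAt (angularMomentum m r) (∑ i, r i t ⨯₃ (m i • deriv (deriv (r i)) t)) t := by
  refine HasDerivAt.fun_sum fun i _ => ?_
  refine (((hd i t).hasDerivAt.cross (hd' i t).hasDerivAt).const_smul (m i)).congr_deriv ?_
  rw [cross_self, add_zero, map_smul]

theorem angularMomentum_eq_of_torque_eq_zero (hd : ∀ i, Differentiable ℝ (r i))
    (hd' : ∀ i, Differentiable ℝ (deriv (r i)))
    (htorque : ∀ t, ∑ i, r i t ⨯₃ (m i • deriv (deriv (r i)) t) = 0) (s t : ℝ) :
    angularMomentum m r s = angularMomentum m r t := by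
  have h := fun t => hasDerivAt_angularMomentum (m := m) hd hd' t
  exact is_const_of_deriv_eq_zero (fun t => (h t).differentiableAt)
    (fun t => (h t).deriv.trans (htorque t)) s t

theorem dotProduct_angularMomentum_eq_zero {t : ℝ} (hcol : ∀ i j, r i t ⨯₃ r j t = 0) (i : ι) :
    r i t ⬝ᵥ angularMomentum m r t = 0 := by
  simp only [angularMomentum, dotProduct_sum, dotProduct_smul]
  refine Finset.sum_eq_zero fun j _ => ?_
  rw [triple_product_permutation, triple_product_permutation, hcol, dotProduct_zero, smul_zero]

end AngularMomentum

theorem collinear_solution_is_planar_general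
    (n : ℕ) (m : Fin n → ℝ) (r : Fin n → ℝ → (Fin 3 → ℝ))
    (g : Fin n → Fin n → ℝ → ℝ)
    (hd : ∀ i, Differentiable ℝ (r i))
    (hd' : ∀ i, Differentiable ℝ (deriv (r i)))
    -- Newton's equations with pairwise forces along the joining lines,
    -- of magnitude depending only on the mutual distances
    (hNewton : ∀ i t, m i • deriv (deriv (r i)) t =
      ∑ j ∈ Finset.univ.erase i, g i j ‖r i t - r j t‖ • (r i t - r j t))
    -- all bodies lie on a common line through the origin
    (hcollinear : ∀ t i j, crossProduct (r i t) (r j t) = 0)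
    -- nonzero total angular momentum
    (hK : ∀ t, ∑ i, m i • crossProduct (r i t) (deriv (r i) t) ≠ 0) :
    ∃ nvec : Fin 3 → ℝ, nvec ≠ 0 ∧ ∀ i t, ∑ k, nvec k * r i t k = 0 := by
  have hconst := angularMomentum_eq_of_torque_eq_zero hd hd' fun t =>
    Finset.sum_eq_zero fun i _ => by
      rw [hNewton i t]
      exact cross_sum_smul_sub_eq_zero (hcollinear t) i _ _
  refine ⟨angularMomentum m r 0, hK 0, fun i t => ?_⟩
  rw [← hconst t, ← dotProduct, dotProduct_comm]
  exact dotProduct_angularMomentum_eq_zero (hcollinear t) i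

/-- Every collinear solution of the n-body problem (bodies on a common line
through the origin, pairwise forces along the joining lines depending only on
the mutual distances, nonzero total angular momentum) is planar: there is a
fixed plane through the origin containing all bodies for all time. -/
theorem collinear_solution_is_planar
    (n : ℕ) (m : Fin n → ℝ) (r : Fin n → ℝ → (Fin 3 → ℝ))
    (g : Fin n → Fin n → ℝ → ℝ)
    (hm : ∀ i, 0 < m i)
    (hd : ∀ i, Differentiable ℝ (r i))
    (hd' : ∀ i, Differentiable ℝ (deriv (r i)))
    -- center of mass fixed at the origin
    (hcm : ∀ t, ∑ i, m i • r i t = 0)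
    -- Newton's equations with pairwise forces along the joining lines,
    -- of magnitude depending only on the mutual distances
    (hNewton : ∀ i t, m i • deriv (deriv (r i)) t =
      ∑ j ∈ Finset.univ.erase i, g i j ‖r i t - r j t‖ • (r i t - r j t))
    -- all bodies lie on a common line through the origin
    (hcollinear : ∀ t i j, crossProduct (r i t) (r j t) = 0)
    -- nonzero total angular momentum
    (hK : ∀ t, ∑ i, m i • crossProduct (r i t) (deriv (r i) t) ≠ 0) :
    ∃ nvec : Fin 3 → ℝ, nvec ≠ 0 ∧ ∀ i t, ∑ k, nvec k * r i t k = 0 :=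
  collinear_solution_is_planar_general n m r g hd hd' hNewton hcollinear hK
end
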